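/- There exists a universal constant C > 0 with the following property. Let c > 0 be a real constant, let G be a finite connected simple graph on a vertex set V of size n ≥ 2 equipped with a fixed linear order on V, and set β = 1/(2c). Let (δ_u)_{u ∈ V} be independent random variables, each exponentially distributed with rate β, and define cluster(w) := the least vertex u ∈ V (in the fixed linear order) minimizing dist_G(u, w) − δ_u. Call an unordered pair {a, b} of distinct labels a contracted edge if G contains an edge {u, v} with cluster(u) = a and cluster(v) = b. Then the expected number of contracted edges is at most C · e^{1/c} · n. In particular, after one application of the low-diameter decomposition with constant parameter β, the contracted inter-cluster graph has O(n) edges in expectation. -/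

import Mathlib

/-!
A contracted edge `{cl u, cl v}` coming from an edge `uv` is charged to the pair `(v, cl u)`.
Distances to `u` and to `v` differ by at most one, so `cl u`, an exact minimiser of
`dist(·, u) - δ`, is a `2`-approximate minimiser of `dist(·, v) - δ`. Hence the number of
contracted edges is at most `∑ v, #{2-approximate minimisers of dist(·, v) - δ}`.

For a fixed `v` and a fixed candidate `a`, condition on the other shifts: if `a` is to be a
`2`-approximate minimiser, `δ a` must exceed some threshold `Y - 2` with `Y` independent of
`δ a`, and by the exponential tail `P(δ a ≥ Y - 2) ≤ e^{2β} P(δ a > Y)`, where `δ a > Y` forces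
`a` to be the strict minimiser. Strict minimisers for distinct `a` are disjoint events, so the
expected number of `2`-approximate minimisers is at most `e^{2β} = e^{1/c}`; summing over `v`
gives the bound with `C = 1`.
-/

open MeasureTheory ProbabilityTheory Finset

section ExpMeasure

variable {β : ℝ}

lemma expMeasure_Ioi (hβ : 0 < β) (t : ℝ) :
    expMeasure β (Set.Ioi t) = ENNReal.ofReal (Real.exp (-(β * max t 0))) := by
  have := isProbabilityMeasure_expMeasure hβ
  rw [← Set.compl_Iic, prob_compl_eq_one_sub measurableSet_Iic, ← ofReal_cdf,
    cdf_expMeasure_eq hβ, ← ENNReal.ofReal_one]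
  rcases le_or_gt 0 t with ht | ht
  · rw [if_pos ht, max_eq_left ht, ← ENNReal.ofReal_sub _
      (sub_nonneg.2 (Real.exp_le_one_iff.2 (neg_nonpos.2 (by positivity)))), sub_sub_cancel]
  · rw [if_neg ht.not_ge, max_eq_right ht.le]
    simp

instance nullSingletonClass_expMeasure (β : ℝ) : NullSingletonClass (expMeasure β) :=
  inferInstanceAs (NullSingletonClass (volume.withDensity _))

lemma expMeasure_Ici (hβ : 0 < β) (t : ℝ) :
    expMeasure β (Set.Ici t) = ENNReal.ofReal (Real.exp (-(β * max t 0))) := by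
  rw [← measure_congr Ioi_ae_eq_Ici, expMeasure_Ioi hβ]

lemma expMeasure_Ici_sub_le (hβ : 0 < β) {s : ℝ} (hs : 0 ≤ s) (t : ℝ) :
    expMeasure β (Set.Ici (t - s))
      ≤ ENNReal.ofReal (Real.exp (β * s)) * expMeasure β (Set.Ioi t) := by
  rw [expMeasure_Ici hβ, expMeasure_Ioi hβ, ← ENNReal.ofReal_mul (Real.exp_pos _).le,
    ← Real.exp_add]
  gcongr
  have : max t 0 ≤ max (t - s) 0 + s :=
    max_le (by linarith [le_max_left (t - s) 0]) (by linarith [le_max_right (t - s) 0])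
  nlinarith

end ExpMeasure

lemma ProbabilityTheory.IndepFun.measure_sub_le_le_exp_mul_measure_lt {Ω : Type*}
    [MeasurableSpace Ω] {μ : Measure Ω} [IsProbabilityMeasure μ] {β : ℝ} (hβ : 0 < β) {Y X : Ω → ℝ}
    (hY : AEMeasurable Y μ) (hX : AEMeasurable X μ) (hXlaw : μ.map X = expMeasure β)
    (hind : IndepFun Y X μ) {s : ℝ} (hs : 0 ≤ s) :
    μ {ω | Y ω - s ≤ X ω} ≤ ENNReal.ofReal (Real.exp (β * s)) * μ {ω | Y ω < X ω} := by
  have := isProbabilityMeasure_expMeasure hβ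
  have law : ∀ A, MeasurableSet A → μ ((fun ω => (Y ω, X ω)) ⁻¹' A)
      = ∫⁻ y, expMeasure β (Prod.mk y ⁻¹' A) ∂(μ.map Y) := fun A hA => by
    rw [← Measure.map_apply_of_aemeasurable (hY.prodMk hX) hA,
      (indepFun_iff_map_prod_eq_prod_map_map hY hX).1 hind, hXlaw, Measure.prod_apply hA]
  calc μ {ω | Y ω - s ≤ X ω}
      = ∫⁻ y, expMeasure β (Set.Ici (y - s)) ∂(μ.map Y) :=
        law _ (measurableSet_le (measurable_fst.sub_const s) measurable_snd)
    _ ≤ ∫⁻ y, ENNReal.ofReal (Real.exp (β * s)) * expMeasure β (Set.Ioi y) ∂(μ.map Y) :=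
        lintegral_mono fun y => expMeasure_Ici_sub_le hβ hs y
    _ = ENNReal.ofReal (Real.exp (β * s)) * μ {ω | Y ω < X ω} := by
        rw [lintegral_const_mul' _ _ ENNReal.ofReal_ne_top]
        exact congrArg _ (law _ (measurableSet_lt measurable_fst measurable_snd)).symm

lemma SimpleGraph.Adj.abs_dist_sub_dist_le_one {V : Type*} {G : SimpleGraph V} {u v : V}
    (h : G.Adj u v) (w : V) : |(G.dist w u : ℝ) - G.dist w v| ≤ 1 := by
  have hle : G.dist w v ≤ G.dist w u + 1 ∧ G.dist w u ≤ G.dist w v + 1 := by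
    rcases h.diff_dist_adj (u := w) with h' | h' | h' <;> omega
  rw [abs_sub_le_iff]
  constructor <;> linarith [(Nat.cast_le (α := ℝ)).2 hle.1, (Nat.cast_le (α := ℝ)).2 hle.2,
    Nat.cast_add_one (R := ℝ) (G.dist w u), Nat.cast_add_one (R := ℝ) (G.dist w v)]

def IsApproxArgmin {ι : Type*} (f : ι → ℝ) (s : ℝ) (a : ι) : Prop :=
  ∀ u, f a ≤ f u + s

lemma IsApproxArgmin.of_abs_sub_le {ι : Type*} {f g : ι → ℝ} {s ε : ℝ} {a : ι}
    (h : IsApproxArgmin f s a) (hfg : ∀ u, |f u - g u| ≤ ε) :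
    IsApproxArgmin g (s + 2 * ε) a :=
  fun u => by
    have ha := abs_le.1 (hfg a)
    have hu := abs_le.1 (hfg u)
    linarith [h u]

def IsStrictArgmin {ι : Type*} (f : ι → ℝ) (a : ι) : Prop :=
  ∀ u ≠ a, f a < f u

lemma IsStrictArgmin.eq {ι : Type*} {f : ι → ℝ} {a b : ι} (ha : IsStrictArgmin f a)
    (hb : IsStrictArgmin f b) : a = b := by
  by_contra hab
  linarith [ha b (Ne.symm hab), hb a hab]

open Classical in
lemma card_contractedEdges_le_sum_card_isApproxArgmin {V : Type*} [Fintype V] [DecidableEq V]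
    (G : SimpleGraph V) [DecidableRel G.Adj] (x : V → ℝ) (cl : V → V)
    (hcl : ∀ w, IsApproxArgmin (fun u => (G.dist u w : ℝ) - x u) 0 (cl w)) :
    #{e ∈ G.edgeFinset.image (Sym2.map cl) | ¬ e.IsDiag}
      ≤ ∑ v, #{a | IsApproxArgmin (fun u => (G.dist u v : ℝ) - x u) 2 a} := by
  set near : V → Finset V :=
    fun v => {a | IsApproxArgmin (fun u => (G.dist u v : ℝ) - x u) 2 a}
  have hsub : G.edgeFinset.image (Sym2.map cl)
      ⊆ (univ.sigma near).image fun p => s(p.2, cl p.1) := by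
    simp only [subset_iff, mem_image, mem_sigma, mem_univ, true_and, forall_exists_index, and_imp]
    intro e' e he he'
    subst he'
    induction e using Sym2.ind with
    | _ u v =>
      have hnear := (hcl u).of_abs_sub_le (g := fun a => (G.dist a v : ℝ) - x a) (ε := 1)
        fun a => by
          simpa only [sub_sub_sub_cancel_right] using
            (SimpleGraph.mem_edgeFinset.1 he).abs_dist_sub_dist_le_one a
      refine ⟨⟨v, cl u⟩, by simpa [near] using hnear, rfl⟩
  calc #{e ∈ G.edgeFinset.image (Sym2.map cl) | ¬ e.IsDiag}
      ≤ #(G.edgeFinset.image (Sym2.map cl)) := card_filter_le _ _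
    _ ≤ #((univ.sigma near).image fun p => s(p.2, cl p.1)) := card_le_card hsub
    _ ≤ #(univ.sigma near) := card_image_le
    _ = ∑ v, #(near v) := card_sigma _ _

open Classical in
lemma card_isApproxArgmin_eq_sum_indicator {V Ω : Type*} [Fintype V] (δ : V → Ω → ℝ)
    (d : V → ℝ) (s : ℝ) (ω : Ω) :
    (#{a | IsApproxArgmin (fun u => d u - δ u ω) s a} : ℝ)
      = ∑ a, {ω | IsApproxArgmin (fun u => d u - δ u ω) s a}.indicator 1 ω := by
  simp [Set.indicator_apply]

section ApproxArgminOfShifts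

variable {V Ω : Type*} [Fintype V] [MeasurableSpace Ω] {μ : Measure Ω} [IsProbabilityMeasure μ]
  {β : ℝ} {δ : V → Ω → ℝ}

lemma measure_isApproxArgmin_le_exp_mul_measure_isStrictArgmin (hβ : 0 < β)
    (hmeas : ∀ u, Measurable (δ u)) (hlaw : ∀ u, μ.map (δ u) = expMeasure β)
    (hind : iIndepFun δ μ) (d : V → ℝ) {s : ℝ} (hs : 0 ≤ s) (a : V) :
    μ {ω | IsApproxArgmin (fun u => d u - δ u ω) s a}
      ≤ ENNReal.ofReal (Real.exp (β * s))
        * μ {ω | IsStrictArgmin (fun u => d u - δ u ω) a} := by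
  classical
  rcases subsingleton_or_nontrivial V with _ | _
  · have hstrict : {ω | IsStrictArgmin (fun u => d u - δ u ω) a} = Set.univ :=
      Set.eq_univ_of_forall fun ω u hu => absurd (Subsingleton.elim u a) hu
    rw [hstrict, measure_univ, mul_one]
    exact prob_le_one.trans (ENNReal.one_le_ofReal.2 (Real.one_le_exp (by positivity)))
  set S := univ.erase a
  obtain ⟨b, hb⟩ := exists_ne a
  have : Nonempty S := ⟨⟨b, mem_erase.2 ⟨hb, mem_univ b⟩⟩⟩
  -- `Y ω = max_{u ≠ a} (δ u ω - d u) + d a` is independent of `δ a`, and `a` is an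
  -- `s`-approximate argmin only if `Y ω - s ≤ δ a ω`, a strict argmin if `Y ω < δ a ω`.
  set g : (S → ℝ) → ℝ := fun x => univ.sup' univ_nonempty (fun i => x i - d i) + d a
  have hg : Measurable g := by
    simpa only [Finset.sup'_apply] using (Finset.measurable_sup'
      (f := fun (i : S) (x : S → ℝ) => x i - d i) univ_nonempty
      fun i _ => (measurable_pi_apply i).sub_const _).add_const (d a)
  set Y : Ω → ℝ := fun ω => g fun i => δ i ω
  have hYind : IndepFun Y (δ a) μ :=
    (hind.indepFun_finset S {a} (disjoint_singleton_right.2 (notMem_erase a _)) hmeas).comp hg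
      (measurable_pi_apply (⟨a, mem_singleton_self a⟩ : ({a} : Finset V)))
  have hY : Measurable Y := hg.comp (measurable_pi_lambda _ fun i => hmeas i)
  calc μ {ω | IsApproxArgmin (fun u => d u - δ u ω) s a}
      ≤ μ {ω | Y ω - s ≤ δ a ω} := measure_mono fun ω hω => by
        have : univ.sup' univ_nonempty (fun i : S => δ i ω - d i) ≤ δ a ω - d a + s :=
          sup'_le _ _ fun i _ => by linarith [hω i]
        simp only [Set.mem_ofPred_eq, Y, g]
        linarith
    _ ≤ ENNReal.ofReal (Real.exp (β * s)) * μ {ω | Y ω < δ a ω} :=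
        hYind.measure_sub_le_le_exp_mul_measure_lt hβ hY.aemeasurable (hmeas a).aemeasurable
          (hlaw a) hs
    _ ≤ ENNReal.ofReal (Real.exp (β * s))
          * μ {ω | IsStrictArgmin (fun u => d u - δ u ω) a} := by
        gcongr with ω
        intro hω u hu
        have := le_sup' (fun i : S => δ i ω - d i) (mem_univ ⟨u, mem_erase.2 ⟨hu, mem_univ u⟩⟩)
        simp only [Y, g] at hω
        linarith

lemma sum_measure_isApproxArgmin_le (hβ : 0 < β)
    (hmeas : ∀ u, Measurable (δ u)) (hlaw : ∀ u, μ.map (δ u) = expMeasure β)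
    (hind : iIndepFun δ μ) (d : V → ℝ) {s : ℝ} (hs : 0 ≤ s) :
    ∑ a, μ {ω | IsApproxArgmin (fun u => d u - δ u ω) s a}
      ≤ ENNReal.ofReal (Real.exp (β * s)) := by
  set strict : V → Set Ω := fun a => {ω | IsStrictArgmin (fun u => d u - δ u ω) a}
  have hdisj : Pairwise (Function.onFun Disjoint strict) := fun a b hab =>
    Set.disjoint_left.2 fun ω ha hb =>
      hab (IsStrictArgmin.eq (f := fun u => d u - δ u ω) ha hb)
  have hstrict : ∀ a, MeasurableSet (strict a) := fun a => by
    simp only [strict, IsStrictArgmin, Set.ofPred_forall]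
    exact .iInter fun u => .iInter fun _ =>
      measurableSet_lt ((hmeas a).const_sub _) ((hmeas u).const_sub _)
  calc ∑ a, μ {ω | IsApproxArgmin (fun u => d u - δ u ω) s a}
      ≤ ∑ a, ENNReal.ofReal (Real.exp (β * s)) * μ (strict a) := sum_le_sum fun a _ =>
        measure_isApproxArgmin_le_exp_mul_measure_isStrictArgmin hβ hmeas hlaw hind d hs a
    _ = ENNReal.ofReal (Real.exp (β * s)) * μ (⋃ a, strict a) := by
        rw [← mul_sum, measure_iUnion hdisj hstrict, tsum_fintype]
    _ ≤ ENNReal.ofReal (Real.exp (β * s)) := mul_le_of_le_one_right' prob_le_one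

lemma measurableSet_isApproxArgmin (hmeas : ∀ u, Measurable (δ u)) (d : V → ℝ) (s : ℝ) (a : V) :
    MeasurableSet {ω | IsApproxArgmin (fun u => d u - δ u ω) s a} := by
  simp only [IsApproxArgmin, Set.ofPred_forall]
  exact .iInter fun u =>
    measurableSet_le ((hmeas a).const_sub _) (((hmeas u).const_sub _).add_const _)

open Classical in
lemma integrable_card_isApproxArgmin (hmeas : ∀ u, Measurable (δ u)) (d : V → ℝ) (s : ℝ) :
    Integrable (fun ω => (#{a | IsApproxArgmin (fun u => d u - δ u ω) s a} : ℝ)) μ := by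
  simp only [card_isApproxArgmin_eq_sum_indicator δ]
  exact integrable_finsetSum _ fun a _ =>
    (integrable_const 1).indicator (measurableSet_isApproxArgmin hmeas d s a)

open Classical in
lemma integral_card_isApproxArgmin_le (hβ : 0 < β)
    (hmeas : ∀ u, Measurable (δ u)) (hlaw : ∀ u, μ.map (δ u) = expMeasure β)
    (hind : iIndepFun δ μ) (d : V → ℝ) {s : ℝ} (hs : 0 ≤ s) :
    ∫ ω, (#{a | IsApproxArgmin (fun u => d u - δ u ω) s a} : ℝ) ∂μ ≤ Real.exp (β * s) := by
  simp only [card_isApproxArgmin_eq_sum_indicator δ]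
  rw [integral_finsetSum _ fun a _ =>
    (integrable_const 1).indicator (measurableSet_isApproxArgmin hmeas d s a)]
  simp only [integral_indicator_one (measurableSet_isApproxArgmin hmeas d s _), Measure.real,
    ← ENNReal.toReal_sum fun a _ => measure_ne_top μ _]
  exact ENNReal.toReal_le_of_le_ofReal (Real.exp_pos _).le
    (sum_measure_isApproxArgmin_le hβ hmeas hlaw hind d hs)

end ApproxArgminOfShifts

/-- After one application of the exponential start time low-diameter decomposition with
constant parameter `β = 1/(2c)`, the contracted inter-cluster graph has `O(n)` edges in
expectation: the expected number of unordered pairs of distinct cluster labels joined by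
an edge of `G` is at most `C · e^{1/c} · n`. -/
theorem expected_contracted_edges_linear
    : ∃ C : ℝ, 0 < C ∧
      ∀ (c : ℝ), 0 < c →
      ∀ (V : Type) [Fintype V] [LinearOrder V] (G : SimpleGraph V)
        [DecidableRel G.Adj],
        G.Connected → 2 ≤ Fintype.card V →
      ∀ (Ω : Type) [MeasurableSpace Ω] (μ : Measure Ω), IsProbabilityMeasure μ →
      ∀ (δ : V → Ω → ℝ),
        (∀ u : V, Measure.map (δ u) μ = expMeasure (1 / (2 * c))) →
        iIndepFun δ μ →
      ∀ (cluster : Ω → V → V),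
        (∀ (ω : Ω) (w : V),
          IsLeast {u : V | ∀ u' : V,
              (G.dist u w : ℝ) - δ u ω ≤ (G.dist u' w : ℝ) - δ u' ω}
            (cluster ω w)) →
        ∫ ω, ((((G.edgeFinset.image (Sym2.map (cluster ω))).filter
            (fun e => ¬ e.IsDiag)).card : ℝ)) ∂μ
          ≤ C * Real.exp (1 / c) * (Fintype.card V : ℝ) := by
  refine ⟨1, one_pos, fun c hc V _ _ G _ _ _ Ω _ μ _ δ hlaw hind cluster hcluster => ?_⟩
  classical
  have hβ : 0 < 1 / (2 * c) := by positivity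
  have haem : ∀ u, AEMeasurable (δ u) μ := fun u => .of_map_ne_zero <| by
    rw [hlaw u]; exact (isProbabilityMeasure_expMeasure hβ).ne_zero
  set δ' : V → Ω → ℝ := fun u => (haem u).mk
  have hδ' : ∀ᵐ ω ∂μ, ∀ u, δ u ω = δ' u ω := ae_all_iff.2 fun u => (haem u).ae_eq_mk
  have hlaw' : ∀ u, μ.map (δ' u) = expMeasure (1 / (2 * c)) := fun u => by
    rw [← Measure.map_congr (haem u).ae_eq_mk, hlaw u]
  have hind' : iIndepFun δ' μ := hind.congr fun u => (haem u).ae_eq_mk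
  have hmeas' : ∀ u, Measurable (δ' u) := fun u => (haem u).measurable_mk
  have hbound : ∀ᵐ ω ∂μ,
      (#{e ∈ G.edgeFinset.image (Sym2.map (cluster ω)) | ¬ e.IsDiag} : ℝ)
        ≤ ∑ v, (#{a | IsApproxArgmin (fun u => (G.dist u v : ℝ) - δ' u ω) 2 a} : ℝ) := by
    filter_upwards [hδ'] with ω hω
    exact_mod_cast card_contractedEdges_le_sum_card_isApproxArgmin G (fun u => δ' u ω)
      (cluster ω) fun w u => by simpa [hω] using (hcluster ω w).1 u
  calc ∫ ω, (#{e ∈ G.edgeFinset.image (Sym2.map (cluster ω)) | ¬ e.IsDiag} : ℝ) ∂μ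
      ≤ ∫ ω, ∑ v, (#{a | IsApproxArgmin (fun u => (G.dist u v : ℝ) - δ' u ω) 2 a} : ℝ) ∂μ :=
        integral_mono_of_nonneg (.of_forall fun _ => by positivity)
          (integrable_finsetSum _ fun v _ => integrable_card_isApproxArgmin hmeas' _ 2) hbound
    _ = ∑ v, ∫ ω,
          (#{a | IsApproxArgmin (fun u => (G.dist u v : ℝ) - δ' u ω) 2 a} : ℝ) ∂μ :=
        integral_finsetSum _ fun v _ => integrable_card_isApproxArgmin hmeas' _ 2
    _ ≤ ∑ _v : V, Real.exp (1 / (2 * c) * 2) := sum_le_sum fun v _ =>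
        integral_card_isApproxArgmin_le hβ hmeas' hlaw' hind' (fun u => (G.dist u v : ℝ))
          two_pos.le
    _ = 1 * Real.exp (1 / c) * (Fintype.card V : ℝ) := by
        rw [sum_const, card_univ, nsmul_eq_mul]
        field_simp
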